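/- With the data of a relational reachability instance (MDP M, m ≥ n ≥ 1, rational q₁,…,q_m, states s₁,…,s_m, surjective index map k, target sets T₁,…,T_m), let v^min = Σ_{c=(s,·)∈Comb} min_{σ∈HR} Σ_{i∈ind(c)} qᵢ · Pr^σ_s(◇Tᵢ) and v^max analogously with max. Then for every rational q and every ε ≥ 0: there exist schedulers σ₁,…,σₙ ∈ HR with |Σ_{i=1}^m qᵢ · Pr^{σ_{k(i)}}_{sᵢ}(◇Tᵢ) − q| ≤ ε if and only if q ∈ [v^min − ε, v^max + ε]. -/

import Mathlib

/-!
Grouping the summands by state-scheduler combination `c = (s, j)` decouples the combinations: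
the scheduler `σⱼ` may follow a different scheduler for each initial state. Hence the
achievable values form the Minkowski sum of the value sets of the combinations, and it suffices
that each of these is the closed interval between its infimum and supremum.

Convexity comes from mixing two schedulers: follow the posterior of a coin flip made at the
start. Attainment of the extrema of `Σ wᵢ Pr(◇Tᵢ)` is the core. On the product of the states with
the set of targets visited so far the objective becomes a total reward. For a discount `γ < 1`
the Bellman operator of this product MDP is a contraction, and the greedy policy of its fixed
point is optimal among all schedulers. There are finitely many such policies, so one of them is
optimal for a sequence `γ → 1`, and the discounted values converge to the undiscounted ones.
-/

open scoped BigOperators Classical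
open Filter

/-- A finite history: an initial state together with a list of (action, next-state) steps. -/
abbrev Hist (S A : Type*) : Type _ := S × List (A × S)

/-- The last state of a history. -/
def Hist.last {S A : Type*} (π : Hist S A) : S :=
  (π.2.getLast?).elim π.1 Prod.snd

/-- A Markov decision process with finite state space `S` and finite action space `A`:
`P s a s'` is the transition probability, each state has at least one enabled action
(an action whose outgoing probabilities sum to `1`), and the outgoing probabilities
of a non-enabled action sum to `0`. -/
structure MDP (S A : Type*) [Fintype S] [Fintype A] where
  P : S → A → S → ℝ
  nonneg : ∀ s a s', 0 ≤ P s a s'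
  le_one : ∀ s a s', P s a s' ≤ 1
  sum_cases : ∀ s a, (∑ s', P s a s') = 1 ∨ (∑ s', P s a s') = 0
  exists_enabled : ∀ s, ∃ a, (∑ s', P s a s') = 1

namespace MDP

variable {S A : Type*} [Fintype S] [Fintype A]

/-- Action `a` is enabled in state `s`. -/
def enabled (M : MDP S A) (s : S) (a : A) : Prop := (∑ s', M.P s a s') = 1

/-- A state is absorbing if every enabled action loops on it with probability 1. -/
def Absorbing (M : MDP S A) (s : S) : Prop := ∀ a, M.enabled s a → M.P s a s = 1

end MDP

/-- A (history-dependent, randomized) scheduler for `M`: it assigns to every finite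
history a probability distribution over the actions enabled at its last state. -/
structure Scheduler {S A : Type*} [Fintype S] [Fintype A] (M : MDP S A) where
  choice : Hist S A → A → ℝ
  nonneg : ∀ π a, 0 ≤ choice π a
  sum_one : ∀ π, (∑ a, choice π a) = 1
  supp : ∀ π a, ¬ M.enabled (Hist.last π) a → choice π a = 0

namespace Scheduler

variable {S A : Type*} [Fintype S] [Fintype A] {M : MDP S A}

/-- A scheduler is memoryless if its choice only depends on the last state of the history. -/
def Memoryless (σ : Scheduler M) : Prop :=
  ∀ π π' : Hist S A, Hist.last π = Hist.last π' → σ.choice π = σ.choice π'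

/-- A scheduler is deterministic if all its choice probabilities are 0 or 1. -/
def Deterministic (σ : Scheduler M) : Prop :=
  ∀ π a, σ.choice π a = 0 ∨ σ.choice π a = 1

/-- Memoryless deterministic (MD) schedulers. -/
def MD (σ : Scheduler M) : Prop := σ.Memoryless ∧ σ.Deterministic

end Scheduler

/-- Probability of reaching the target set `T` within `n` steps, starting from history `π`,
under scheduler `σ`. -/
noncomputable def reachN {S A : Type*} [Fintype S] [Fintype A] (M : MDP S A)
    (σ : Scheduler M) (T : Set S) : ℕ → Hist S A → ℝ
  | 0, π => if Hist.last π ∈ T then 1 else 0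
  | n + 1, π =>
      if Hist.last π ∈ T then 1
      else ∑ a, σ.choice π a * ∑ s', M.P (Hist.last π) a s' *
        reachN M σ T n (π.1, π.2 ++ [(a, s')])

/-- `Pr M σ s T` is the probability of eventually reaching `T` from state `s` under
scheduler `σ`: the supremum of the step-bounded reachability probabilities. -/
noncomputable def Pr {S A : Type*} [Fintype S] [Fintype A] (M : MDP S A)
    (σ : Scheduler M) (s : S) (T : Set S) : ℝ :=
  ⨆ n : ℕ, reachN M σ T n (s, [])

/-- The set `Comb` of state-scheduler combinations `(sᵢ, k(i))` of a relational
reachability instance. -/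
noncomputable def combSet {S : Type*} [Fintype S] {m n : ℕ}
    (s : Fin m → S) (k : Fin m → Fin n) : Finset (S × Fin n) :=
  Finset.image (fun i => (s i, k i)) Finset.univ

/-- The contribution `Σ_{i ∈ ind(c)} qᵢ · Pr^σ_{c.1}(◇Tᵢ)` of a state-scheduler
combination `c` under a scheduler `σ`. -/
noncomputable def combVal {S A : Type*} [Fintype S] [Fintype A] {m n : ℕ}
    (M : MDP S A) (q : Fin m → ℚ) (s : Fin m → S) (k : Fin m → Fin n)
    (T : Fin m → Set S) (σ : Scheduler M) (c : S × Fin n) : ℝ :=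
  ∑ i ∈ Finset.univ.filter (fun i => (s i, k i) = c), (q i : ℝ) * Pr M σ c.1 (T i)

/-- `v^min`: the sum over all combinations `c` of the infimum over all schedulers of the
contribution of `c`. -/
noncomputable def vMin {S A : Type*} [Fintype S] [Fintype A] {m n : ℕ}
    (M : MDP S A) (q : Fin m → ℚ) (s : Fin m → S) (k : Fin m → Fin n)
    (T : Fin m → Set S) : ℝ :=
  ∑ c ∈ combSet s k, sInf {x : ℝ | ∃ σ : Scheduler M, x = combVal M q s k T σ c}

/-- `v^max`: the sum over all combinations `c` of the supremum over all schedulers of the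
contribution of `c`. -/
noncomputable def vMax {S A : Type*} [Fintype S] [Fintype A] {m n : ℕ}
    (M : MDP S A) (q : Fin m → ℚ) (s : Fin m → S) (k : Fin m → Fin n)
    (T : Fin m → Set S) : ℝ :=
  ∑ c ∈ combSet s k, sSup {x : ℝ | ∃ σ : Scheduler M, x = combVal M q s k T σ c}

/-- The achievable value set
`A = {Σ_{i} qᵢ · Pr^{σ_{k(i)}}_{sᵢ}(◇Tᵢ) : σ₁,…,σₙ ∈ HR}`. -/
noncomputable def achSet {S A : Type*} [Fintype S] [Fintype A] {m n : ℕ}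
    (M : MDP S A) (q : Fin m → ℚ) (s : Fin m → S) (k : Fin m → Fin n)
    (T : Fin m → Set S) : Set ℝ :=
  {x : ℝ | ∃ σ : Fin n → Scheduler M,
    x = ∑ i, (q i : ℝ) * Pr M (σ (k i)) (s i) (T i)}

namespace Hist

variable {S A : Type*}

def snoc (π : Hist S A) (a : A) (s' : S) : Hist S A := (π.1, π.2 ++ [(a, s')])

@[simp]
lemma last_snoc (π : Hist S A) (a : A) (s' : S) : Hist.last (π.snoc a s') = s' := by
  simp [snoc, Hist.last]

@[simp]
lemma last_nil (s : S) : Hist.last ((s, []) : Hist S A) = s := rfl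

end Hist

section Visited

variable {S A ι : Type*} [Fintype ι]

noncomputable def hits (T : ι → Set S) (s : S) : Finset ι := Finset.univ.filter fun i => s ∈ T i

noncomputable def visited (T : ι → Set S) (π : Hist S A) : Finset ι :=
  π.2.foldl (fun R x => R ∪ hits T x.2) (hits T π.1)

lemma visited_nil (T : ι → Set S) (s : S) : visited T ((s, []) : Hist S A) = hits T s := rfl

lemma visited_snoc (T : ι → Set S) (π : Hist S A) (a : A) (s' : S) :
    visited T (π.snoc a s') = visited T π ∪ hits T s' := by
  simp [visited, Hist.snoc, List.foldl_append]

end Visited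

lemma exists_mem_Icc_abs_sub_le_iff {a b c ε : ℝ} (hab : a ≤ b) (hε : 0 ≤ ε) :
    (∃ x ∈ Set.Icc a b, |x - c| ≤ ε) ↔ c ∈ Set.Icc (a - ε) (b + ε) := by
  constructor
  · rintro ⟨x, ⟨hax, hxb⟩, hx⟩
    rw [abs_le] at hx
    exact ⟨by linarith, by linarith⟩
  · rintro ⟨h₁, h₂⟩
    refine ⟨max a (min b c), ⟨le_max_left _ _, max_le hab (min_le_left _ _)⟩, abs_le.2 ⟨?_, ?_⟩⟩
    · linarith [(le_min (by linarith : c - ε ≤ b) (by linarith : c - ε ≤ c)).trans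
        (le_max_right a (min b c))]
    · linarith [max_le (by linarith : a ≤ c + ε)
        ((min_le_right b c).trans (by linarith : c ≤ c + ε))]

section

variable {S A : Type*} [Fintype S] [Fintype A] {M : MDP S A}

namespace MDP

noncomputable def enabledActions (M : MDP S A) (s : S) : Finset A :=
  Finset.univ.filter (M.enabled s)

lemma enabledActions_nonempty (M : MDP S A) (s : S) : (M.enabledActions s).Nonempty :=
  let ⟨a, ha⟩ := M.exists_enabled s
  ⟨a, Finset.mem_filter.2 ⟨Finset.mem_univ a, ha⟩⟩

lemma mem_enabledActions {s : S} {a : A} : a ∈ M.enabledActions s ↔ M.enabled s a := by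
  simp [enabledActions]

noncomputable def bestExp (M : MDP S A) (x : S → ℝ) (s : S) : ℝ :=
  (M.enabledActions s).sup' (M.enabledActions_nonempty s) fun a => ∑ s', M.P s a s' * x s'

lemma sum_P_mul_add_const {s : S} {a : A} (ha : M.enabled s a) (x : S → ℝ) (c : ℝ) :
    ∑ s', M.P s a s' * (x s' + c) = ∑ s', M.P s a s' * x s' + c := by
  rw [Finset.sum_congr rfl fun s' _ => mul_add (M.P s a s') (x s') c, Finset.sum_add_distrib,
    ← Finset.sum_mul, show ∑ s', M.P s a s' = 1 from ha, one_mul]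

lemma sum_P_mul_le_bestExp {s : S} {a : A} (ha : M.enabled s a) (x : S → ℝ) :
    ∑ s', M.P s a s' * x s' ≤ M.bestExp x s :=
  Finset.le_sup' (fun a => ∑ s', M.P s a s' * x s') (mem_enabledActions.2 ha)

lemma exists_enabled_sum_P_mul_eq_bestExp (x : S → ℝ) (s : S) :
    ∃ a, M.enabled s a ∧ ∑ s', M.P s a s' * x s' = M.bestExp x s := by
  obtain ⟨a, ha, h⟩ := Finset.exists_mem_eq_sup' (M.enabledActions_nonempty s)
    fun a => ∑ s', M.P s a s' * x s'
  exact ⟨a, mem_enabledActions.1 ha, h.symm⟩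

lemma bestExp_const (c : ℝ) (s : S) : M.bestExp (fun _ => c) s = c := by
  refine (Finset.sup'_congr _ rfl fun a ha => ?_).trans (Finset.sup'_const _ c)
  simpa using sum_P_mul_add_const (mem_enabledActions.1 ha) 0 c

lemma bestExp_le_add_dist (x y : S → ℝ) (s : S) : M.bestExp x s ≤ M.bestExp y s + dist x y := by
  refine Finset.sup'_le _ _ fun a ha => ?_
  have ha := mem_enabledActions.1 ha
  calc ∑ s', M.P s a s' * x s' ≤ ∑ s', M.P s a s' * (y s' + dist x y) :=
        Finset.sum_le_sum fun s' _ => mul_le_mul_of_nonneg_left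
          (by linarith [Real.sub_le_dist (x s') (y s'), dist_le_pi_dist x y s'])
          (M.nonneg s a s')
    _ ≤ M.bestExp y s + dist x y := by
        rw [sum_P_mul_add_const ha]; exact add_le_add_left (sum_P_mul_le_bestExp ha y) _

lemma abs_bestExp_sub_le (x y : S → ℝ) (s : S) :
    |M.bestExp x s - M.bestExp y s| ≤ dist x y := by
  have := M.bestExp_le_add_dist x y s
  have := M.bestExp_le_add_dist y x s
  rw [dist_comm] at this
  exact abs_sub_le_iff.2 ⟨by linarith, by linarith⟩

end MDP

namespace Scheduler

def stepExp (σ : Scheduler M) (π : Hist S A) : (Hist S A → ℝ) →ₗ[ℝ] ℝ where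
  toFun f := ∑ a, σ.choice π a * ∑ s', M.P (Hist.last π) a s' * f (π.snoc a s')
  map_add' f g := by
    simp only [Pi.add_apply, mul_add, Finset.sum_add_distrib]
  map_smul' c f := by
    simp only [Pi.smul_apply, smul_eq_mul, RingHom.id_apply, Finset.mul_sum]
    refine Finset.sum_congr rfl fun a _ => Finset.sum_congr rfl fun s' _ => by ring

variable (σ : Scheduler M) (π : Hist S A)

lemma stepExp_apply (f : Hist S A → ℝ) :
    σ.stepExp π f = ∑ a, σ.choice π a * ∑ s', M.P (Hist.last π) a s' * f (π.snoc a s') := rfl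

lemma sum_choice_mul_eq_of_enabled {g h : A → ℝ}
    (hgh : ∀ a, M.enabled (Hist.last π) a → g a = h a) :
    ∑ a, σ.choice π a * g a = ∑ a, σ.choice π a * h a := by
  refine Finset.sum_congr rfl fun a _ => ?_
  by_cases ha : M.enabled (Hist.last π) a
  · rw [hgh a ha]
  · simp [σ.supp π a ha]

lemma stepExp_const (c : ℝ) : σ.stepExp π (fun _ => c) = c := by
  rw [stepExp_apply, σ.sum_choice_mul_eq_of_enabled π (h := fun _ => c), ← Finset.sum_mul,
    σ.sum_one, one_mul]
  intro a ha
  rw [← Finset.sum_mul, show ∑ s', M.P _ a s' = 1 from ha, one_mul]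

lemma stepExp_mono {f g : Hist S A → ℝ} (h : f ≤ g) : σ.stepExp π f ≤ σ.stepExp π g :=
  Finset.sum_le_sum fun a _ => mul_le_mul_of_nonneg_left
    (Finset.sum_le_sum fun s' _ => mul_le_mul_of_nonneg_left (h _) (M.nonneg _ a s'))
    (σ.nonneg π a)

lemma stepExp_le_const {f : Hist S A → ℝ} {c : ℝ} (h : ∀ π', f π' ≤ c) :
    σ.stepExp π f ≤ c :=
  (σ.stepExp_mono π h).trans_eq (σ.stepExp_const π c)

lemma const_le_stepExp {f : Hist S A → ℝ} {c : ℝ} (h : ∀ π', c ≤ f π') :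
    c ≤ σ.stepExp π f :=
  (σ.stepExp_const π c).symm.trans_le (σ.stepExp_mono π h)

lemma stepExp_sum_mul {ι : Type*} (J : Finset ι) (w : ι → ℝ) (f : ι → Hist S A → ℝ) :
    σ.stepExp π (fun π' => ∑ i ∈ J, w i * f i π') = ∑ i ∈ J, w i * σ.stepExp π (f i) := by
  have : (fun π' => ∑ i ∈ J, w i * f i π') = ∑ i ∈ J, w i • f i := by
    ext π'; simp [Finset.sum_apply]
  simp [this, map_sum]

lemma sum_choice_mul_le {Z : A → ℝ} {c : ℝ}
    (hZ : ∀ a, M.enabled (Hist.last π) a → Z a ≤ c) : ∑ a, σ.choice π a * Z a ≤ c :=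
  calc ∑ a, σ.choice π a * Z a ≤ ∑ a, σ.choice π a * c := Finset.sum_le_sum fun a _ => by
        by_cases ha : M.enabled (Hist.last π) a
        · exact mul_le_mul_of_nonneg_left (hZ a ha) (σ.nonneg π a)
        · simp [σ.supp π a ha]
    _ = c := by rw [← Finset.sum_mul, σ.sum_one, one_mul]

lemma stepExp_le_bestExp_add {f : Hist S A → ℝ} {x : S → ℝ} {c : ℝ}
    (h : ∀ π', f π' ≤ x (Hist.last π') + c) :
    σ.stepExp π f ≤ M.bestExp x (Hist.last π) + c := by
  refine σ.sum_choice_mul_le π fun a ha => ?_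
  calc ∑ s', M.P (Hist.last π) a s' * f (π.snoc a s')
      ≤ ∑ s', M.P (Hist.last π) a s' * (x s' + c) :=
        Finset.sum_le_sum fun s' _ => mul_le_mul_of_nonneg_left
          ((h _).trans_eq (by rw [Hist.last_snoc])) (M.nonneg _ a s')
    _ ≤ M.bestExp x (Hist.last π) + c := by
        rw [MDP.sum_P_mul_add_const ha]; exact add_le_add_left (MDP.sum_P_mul_le_bestExp ha x) c

end Scheduler

noncomputable def dreachN (M : MDP S A) (γ : ℝ) (σ : Scheduler M) (T : Set S) :
    ℕ → Hist S A → ℝ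
  | 0, π => if Hist.last π ∈ T then 1 else 0
  | n + 1, π => if Hist.last π ∈ T then 1 else γ * σ.stepExp π (dreachN M γ σ T n)

section Reach

variable (σ : Scheduler M) (T : Set S) {γ : ℝ}

lemma reachN_succ (n : ℕ) (π : Hist S A) :
    reachN M σ T (n + 1) π = if Hist.last π ∈ T then 1 else σ.stepExp π (reachN M σ T n) :=
  rfl

lemma dreachN_succ (n : ℕ) (π : Hist S A) :
    dreachN M γ σ T (n + 1) π
      = if Hist.last π ∈ T then 1 else γ * σ.stepExp π (dreachN M γ σ T n) :=
  rfl

lemma reachN_eq_dreachN_one (n : ℕ) : reachN M σ T n = dreachN M 1 σ T n := by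
  induction n with
  | zero => rfl
  | succ n ih => ext π; rw [reachN_succ, dreachN_succ, ih, one_mul]

lemma dreachN_nonneg (hγ₀ : 0 ≤ γ) (n : ℕ) : 0 ≤ dreachN M γ σ T n := by
  induction n with
  | zero => intro π; simp only [dreachN]; split_ifs <;> norm_num
  | succ n ih =>
    intro π
    rw [Pi.zero_apply, dreachN_succ]
    split_ifs
    · exact zero_le_one
    · exact mul_nonneg hγ₀ (σ.const_le_stepExp π ih)

lemma dreachN_le_one (hγ₀ : 0 ≤ γ) (hγ₁ : γ ≤ 1) (n : ℕ) (π : Hist S A) :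
    dreachN M γ σ T n π ≤ 1 := by
  induction n generalizing π with
  | zero => simp only [dreachN]; split_ifs <;> norm_num
  | succ n ih =>
    rw [dreachN_succ]
    split_ifs
    · exact le_rfl
    · exact mul_le_one₀ hγ₁ (σ.const_le_stepExp π (dreachN_nonneg σ T hγ₀ n))
        (σ.stepExp_le_const π ih)

lemma dreachN_le_succ (hγ₀ : 0 ≤ γ) (n : ℕ) : dreachN M γ σ T n ≤ dreachN M γ σ T (n + 1) := by
  induction n with
  | zero =>
    intro π
    rw [dreachN_succ]
    split_ifs with h
    · simp [dreachN, h]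
    · simpa [dreachN, h] using mul_nonneg hγ₀ (σ.const_le_stepExp π (dreachN_nonneg σ T hγ₀ 0))
  | succ n ih =>
    intro π
    rw [dreachN_succ, dreachN_succ]
    split_ifs
    · exact le_rfl
    · exact mul_le_mul_of_nonneg_left (σ.stepExp_mono π ih) hγ₀

lemma dreachN_monotone (hγ₀ : 0 ≤ γ) (π : Hist S A) : Monotone fun n => dreachN M γ σ T n π :=
  monotone_nat_of_le_succ fun n => dreachN_le_succ σ T hγ₀ n π

lemma dreachN_le_reachN (hγ₀ : 0 ≤ γ) (hγ₁ : γ ≤ 1) (n : ℕ) :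
    dreachN M γ σ T n ≤ reachN M σ T n := by
  induction n with
  | zero => exact le_rfl
  | succ n ih =>
    intro π
    rw [dreachN_succ, reachN_succ]
    split_ifs
    · exact le_rfl
    · calc γ * σ.stepExp π (dreachN M γ σ T n)
          ≤ σ.stepExp π (dreachN M γ σ T n) :=
            mul_le_of_le_one_left (σ.const_le_stepExp π (dreachN_nonneg σ T hγ₀ n)) hγ₁
        _ ≤ σ.stepExp π (reachN M σ T n) := σ.stepExp_mono π ih

lemma reachN_le_one (n : ℕ) (π : Hist S A) : reachN M σ T n π ≤ 1 := by
  rw [reachN_eq_dreachN_one]; exact dreachN_le_one σ T zero_le_one le_rfl n π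

lemma reachN_sub_dreachN_le (hγ₀ : 0 ≤ γ) (hγ₁ : γ ≤ 1) (n : ℕ) (π : Hist S A) :
    reachN M σ T n π - dreachN M γ σ T n π ≤ n * (1 - γ) := by
  induction n generalizing π with
  | zero => simp [reachN, dreachN]
  | succ n ih =>
    rw [reachN_succ, dreachN_succ]
    split_ifs
    · push_cast; nlinarith
    · have hr : σ.stepExp π (reachN M σ T n) ≤ 1 := σ.stepExp_le_const π (reachN_le_one σ T n)
      have hrd : σ.stepExp π (reachN M σ T n) - σ.stepExp π (dreachN M γ σ T n)
          ≤ n * (1 - γ) := by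
        rw [← map_sub]; exact σ.stepExp_le_const π ih
      have hγn : γ * (n * (1 - γ)) ≤ n * (1 - γ) :=
        mul_le_of_le_one_left (mul_nonneg n.cast_nonneg (sub_nonneg.2 hγ₁)) hγ₁
      push_cast
      nlinarith [mul_le_mul_of_nonneg_left hr (sub_nonneg.2 hγ₁),
        mul_le_mul_of_nonneg_left hrd hγ₀]

lemma bddAbove_range_dreachN (hγ₀ : 0 ≤ γ) (hγ₁ : γ ≤ 1) (π : Hist S A) :
    BddAbove (Set.range fun n => dreachN M γ σ T n π) :=
  ⟨1, Set.forall_mem_range.2 fun n => dreachN_le_one σ T hγ₀ hγ₁ n π⟩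

lemma tendsto_reachN_Pr (s : S) :
    Tendsto (fun n => reachN M σ T n (s, [])) atTop (nhds (Pr M σ s T)) := by
  simp only [Pr, reachN_eq_dreachN_one]
  exact tendsto_atTop_ciSup (dreachN_monotone σ T zero_le_one _)
    (bddAbove_range_dreachN σ T zero_le_one le_rfl _)

end Reach

/-- Discounted reachability: the expectation of `γ ^ τ` for the hitting time `τ` of `T`. -/
noncomputable def dPr (M : MDP S A) (γ : ℝ) (σ : Scheduler M) (s : S) (T : Set S) : ℝ :=
  ⨆ n : ℕ, dreachN M γ σ T n (s, [])

section DiscountedReach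

variable (σ : Scheduler M) (T : Set S) {γ : ℝ} (s : S)

lemma tendsto_dreachN_dPr (hγ₀ : 0 ≤ γ) (hγ₁ : γ ≤ 1) :
    Tendsto (fun n => dreachN M γ σ T n (s, [])) atTop (nhds (dPr M γ σ s T)) :=
  tendsto_atTop_ciSup (dreachN_monotone σ T hγ₀ _) (bddAbove_range_dreachN σ T hγ₀ hγ₁ _)

lemma dPr_le_Pr (hγ₀ : 0 ≤ γ) (hγ₁ : γ ≤ 1) : dPr M γ σ s T ≤ Pr M σ s T :=
  le_of_tendsto_of_tendsto' (tendsto_dreachN_dPr σ T s hγ₀ hγ₁) (tendsto_reachN_Pr σ T s)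
    fun n => dreachN_le_reachN σ T hγ₀ hγ₁ n _

lemma tendsto_dPr_Pr {γ : ℕ → ℝ} (hγ₀ : ∀ j, 0 ≤ γ j) (hγ₁ : ∀ j, γ j ≤ 1)
    (hγ : Tendsto γ atTop (nhds 1)) :
    Tendsto (fun j => dPr M (γ j) σ s T) atTop (nhds (Pr M σ s T)) := by
  refine tendsto_order.2 ⟨fun a ha => ?_, fun b hb =>
    Eventually.of_forall fun j => (dPr_le_Pr σ T s (hγ₀ j) (hγ₁ j)).trans_lt hb⟩
  obtain ⟨N, hN⟩ := ((tendsto_reachN_Pr σ T s).eventually (lt_mem_nhds ha)).exists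
  have hgap : Tendsto (fun j => (N : ℝ) * (1 - γ j)) atTop (nhds 0) := by
    simpa using ((tendsto_const_nhds (x := (1 : ℝ))).sub hγ).const_mul (N : ℝ)
  filter_upwards [hgap.eventually (gt_mem_nhds (sub_pos.2 hN))] with j hj
  have h₁ := reachN_sub_dreachN_le σ T (hγ₀ j) (hγ₁ j) N (s, [])
  have h₂ := (dreachN_monotone σ T (hγ₀ j) _).ge_of_tendsto
    (tendsto_dreachN_dPr σ T s (hγ₀ j) (hγ₁ j)) N
  linarith

end DiscountedReach

namespace Scheduler

lemma stepExp_congr (σ : Scheduler M) (π : Hist S A) {f g : Hist S A → ℝ}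
    (h : ∀ a s', f (π.snoc a s') = g (π.snoc a s')) : σ.stepExp π f = σ.stepExp π g := by
  simp only [stepExp_apply, h]

noncomputable def ofAction (f : Hist S A → A) (hf : ∀ π, M.enabled (Hist.last π) (f π)) :
    Scheduler M where
  choice π a := if a = f π then 1 else 0
  nonneg π a := by split_ifs <;> norm_num
  sum_one π := by simp
  supp π a h := if_neg fun (ha : a = f π) => h (ha ▸ hf π)

lemma stepExp_ofAction (f : Hist S A → A) (hf : ∀ π, M.enabled (Hist.last π) (f π))
    (π : Hist S A) (g : Hist S A → ℝ) :
    (ofAction f hf).stepExp π g = ∑ s', M.P (Hist.last π) (f π) s' * g (π.snoc (f π) s') := by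
  simp [stepExp_apply, ofAction, ite_mul]

def glue (F : S → Scheduler M) : Scheduler M where
  choice π := (F π.1).choice π
  nonneg π := (F π.1).nonneg π
  sum_one π := (F π.1).sum_one π
  supp π := (F π.1).supp π

lemma reachN_glue (F : S → Scheduler M) (T : Set S) (n : ℕ) (π : Hist S A) :
    reachN M (glue F) T n π = reachN M (F π.1) T n π := by
  induction n generalizing π with
  | zero => rfl
  | succ n ih =>
    rw [reachN_succ, reachN_succ]
    congr 1
    exact (F π.1).stepExp_congr π fun a s' => ih _

lemma Pr_glue (F : S → Scheduler M) (s : S) (T : Set S) : Pr M (glue F) s T = Pr M (F s) s T :=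
  congrArg _ (funext fun n => reachN_glue F T n (s, []))

/-- Transition probabilities are left out: they are the same for all schedulers and cancel in
the posterior used by `mix`. -/
noncomputable def weightFrom (σ : Scheduler M) : Hist S A → List (A × S) → ℝ
  | _, [] => 1
  | π, (a, s') :: l => σ.choice π a * σ.weightFrom (π.snoc a s') l

noncomputable def weight (σ : Scheduler M) (π : Hist S A) : ℝ := σ.weightFrom (π.1, []) π.2

variable (σ : Scheduler M)

lemma weightFrom_nonneg (l : List (A × S)) (π : Hist S A) : 0 ≤ σ.weightFrom π l := by
  induction l generalizing π with
  | nil => exact zero_le_one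
  | cons x l ih => exact mul_nonneg (σ.nonneg π x.1) (ih _)

lemma weight_nonneg (π : Hist S A) : 0 ≤ σ.weight π := σ.weightFrom_nonneg π.2 _

lemma weightFrom_concat (l : List (A × S)) (π : Hist S A) (a : A) (s' : S) :
    σ.weightFrom π (l ++ [(a, s')]) = σ.weightFrom π l * σ.choice (π.1, π.2 ++ l) a := by
  induction l generalizing π with
  | nil => simp [weightFrom]
  | cons x l ih =>
    obtain ⟨c, u⟩ := x
    simp [weightFrom, ih, Hist.snoc, mul_assoc]

lemma weight_snoc (π : Hist S A) (a : A) (s' : S) :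
    σ.weight (π.snoc a s') = σ.weight π * σ.choice π a := by
  simp [weight, Hist.snoc, weightFrom_concat]

variable (σ₀ σ₁ : Scheduler M)

noncomputable def mixMass (a b : ℝ) (π : Hist S A) : ℝ := a * σ₀.weight π + b * σ₁.weight π

/-- Follows `σ₀` with probability `a` and `σ₁` with probability `b`: each step is taken according
to the posterior of this initial coin flip, proportional to `mixMass`. -/
noncomputable def mix (a b : ℝ) (ha : 0 ≤ a) (hb : 0 ≤ b) : Scheduler M where
  choice π α := if mixMass σ₀ σ₁ a b π = 0 then σ₀.choice π α
    else (a * σ₀.weight π * σ₀.choice π α + b * σ₁.weight π * σ₁.choice π α) /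
      mixMass σ₀ σ₁ a b π
  nonneg π α := by
    split_ifs
    · exact σ₀.nonneg π α
    · exact div_nonneg
        (add_nonneg (mul_nonneg (mul_nonneg ha (σ₀.weight_nonneg π)) (σ₀.nonneg π α))
          (mul_nonneg (mul_nonneg hb (σ₁.weight_nonneg π)) (σ₁.nonneg π α)))
        (add_nonneg (mul_nonneg ha (σ₀.weight_nonneg π)) (mul_nonneg hb (σ₁.weight_nonneg π)))
  sum_one π := by
    split_ifs with h
    · exact σ₀.sum_one π
    · rw [← Finset.sum_div, Finset.sum_add_distrib, ← Finset.mul_sum, ← Finset.mul_sum,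
        σ₀.sum_one, σ₁.sum_one, mul_one, mul_one]
      exact div_self h
  supp π α h := by
    split_ifs
    · exact σ₀.supp π α h
    · simp [σ₀.supp π α h, σ₁.supp π α h]

variable {a b : ℝ} (ha : 0 ≤ a) (hb : 0 ≤ b)

lemma mixMass_snoc (π : Hist S A) (α : A) (s' : S) :
    mixMass σ₀ σ₁ a b (π.snoc α s') = mixMass σ₀ σ₁ a b π * (mix σ₀ σ₁ a b ha hb).choice π α := by
  simp only [mix]
  split_ifs with h
  · have h₀ : a * σ₀.weight π = 0 := by
      unfold mixMass at h
      nlinarith [mul_nonneg ha (σ₀.weight_nonneg π), mul_nonneg hb (σ₁.weight_nonneg π)]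
    have h₁ : b * σ₁.weight π = 0 := by
      unfold mixMass at h
      nlinarith [mul_nonneg ha (σ₀.weight_nonneg π), mul_nonneg hb (σ₁.weight_nonneg π)]
    rw [h, zero_mul, mixMass, weight_snoc, weight_snoc]
    linear_combination σ₀.choice π α * h₀ + σ₁.choice π α * h₁
  · rw [mul_div_cancel₀ _ h, mixMass, weight_snoc, weight_snoc]
    ring

lemma mixMass_mul_stepExp (π : Hist S A) {f f₀ f₁ : Hist S A → ℝ}
    (hf : ∀ π', mixMass σ₀ σ₁ a b π' * f π'
      = a * σ₀.weight π' * f₀ π' + b * σ₁.weight π' * f₁ π') :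
    mixMass σ₀ σ₁ a b π * (mix σ₀ σ₁ a b ha hb).stepExp π f
      = a * σ₀.weight π * σ₀.stepExp π f₀ + b * σ₁.weight π * σ₁.stepExp π f₁ := by
  simp only [stepExp_apply, Finset.mul_sum, ← Finset.sum_add_distrib]
  refine Finset.sum_congr rfl fun α _ => Finset.sum_congr rfl fun s' _ => ?_
  have key := hf (π.snoc α s')
  rw [mixMass_snoc σ₀ σ₁ ha hb, weight_snoc, weight_snoc] at key
  linear_combination M.P (Hist.last π) α s' * key

lemma mixMass_mul_reachN (T : Set S) (n : ℕ) (π : Hist S A) :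
    mixMass σ₀ σ₁ a b π * reachN M (mix σ₀ σ₁ a b ha hb) T n π
      = a * σ₀.weight π * reachN M σ₀ T n π + b * σ₁.weight π * reachN M σ₁ T n π := by
  induction n generalizing π with
  | zero => simp only [reachN, mixMass]; split_ifs <;> ring
  | succ n ih =>
    simp only [reachN_succ]
    split_ifs
    · simp only [mixMass]; ring
    · exact mixMass_mul_stepExp σ₀ σ₁ ha hb π ih

lemma Pr_mix (hab : a + b = 1) (s : S) (T : Set S) :
    Pr M (mix σ₀ σ₁ a b ha hb) s T = a * Pr M σ₀ s T + b * Pr M σ₁ s T := by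
  have h : ∀ n, reachN M (mix σ₀ σ₁ a b ha hb) T n (s, [])
      = a * reachN M σ₀ T n (s, []) + b * reachN M σ₁ T n (s, []) := fun n => by
    simpa [mixMass, weight, weightFrom, hab] using mixMass_mul_reachN σ₀ σ₁ ha hb T n (s, [])
  refine tendsto_nhds_unique (tendsto_reachN_Pr _ T s) ?_
  simp only [h]
  exact ((tendsto_reachN_Pr σ₀ T s).const_mul a).add ((tendsto_reachN_Pr σ₁ T s).const_mul b)

end Scheduler

section Bellman

variable {ι : Type*} [Fintype ι]

/-- The Bellman operator of the discounted product MDP with states `(s, R)`, where `R` is the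
set of targets visited before `s`: entering `s` collects the weights of the targets newly
visited. -/
noncomputable def bellman (M : MDP S A) (w : ι → ℝ) (T : ι → Set S) (γ : ℝ)
    (x : S → Finset ι → ℝ) : S → Finset ι → ℝ := fun s R =>
  ∑ i ∈ hits T s \ R, w i + γ * M.bestExp (fun s' => x s' (R ∪ hits T s)) s

lemma abs_sub_le_dist_pi₂ (x y : S → Finset ι → ℝ) (s : S) (R : Finset ι) :
    |x s R - y s R| ≤ dist x y :=
  (Real.dist_eq _ _).symm.trans_le ((dist_le_pi_dist _ _ R).trans (dist_le_pi_dist x y s))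

/-- Memoryless deterministic policies of the product MDP. -/
abbrev VisitPolicy (M : MDP S A) (ι : Type*) :=
  {p : S → Finset ι → A // ∀ s R, M.enabled s (p s R)}

noncomputable def VisitPolicy.toScheduler (p : VisitPolicy M ι) (T : ι → Set S) : Scheduler M :=
  Scheduler.ofAction (fun π => p.1 (Hist.last π) (visited T π)) fun _ => p.2 _ _

variable (M) (w : ι → ℝ) (T : ι → Set S) {γ : ℝ}

lemma dist_bellman_le (hγ₀ : 0 ≤ γ) (x y : S → Finset ι → ℝ) :
    dist (bellman M w T γ x) (bellman M w T γ y) ≤ γ * dist x y := by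
  have hγd := mul_nonneg hγ₀ (dist_nonneg (x := x) (y := y))
  refine (dist_pi_le_iff hγd).2 fun s => (dist_pi_le_iff hγd).2 fun R => ?_
  set R' := R ∪ hits T s
  have h : dist (fun s' => x s' R') (fun s' => y s' R') ≤ dist x y :=
    (dist_pi_le_iff dist_nonneg).2 fun s' =>
      (Real.dist_eq _ _).trans_le (abs_sub_le_dist_pi₂ x y s' R')
  rw [Real.dist_eq, bellman, bellman, add_sub_add_left_eq_sub, ← mul_sub, abs_mul,
    abs_of_nonneg hγ₀]
  exact mul_le_mul_of_nonneg_left ((M.abs_bestExp_sub_le _ _ s).trans h) hγ₀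

lemma bellman_contractingWith (hγ₀ : 0 ≤ γ) (hγ₁ : γ < 1) :
    ContractingWith ⟨γ, hγ₀⟩ (bellman M w T γ) :=
  ⟨hγ₁, LipschitzWith.of_dist_le_mul fun x y => dist_bellman_le M w T hγ₀ x y⟩

noncomputable def discVal (γ : ℝ) (σ : Scheduler M) (n : ℕ) (π : Hist S A) (R : Finset ι) : ℝ :=
  ∑ i ∈ Rᶜ, w i * dreachN M γ σ (T i) n π

lemma discVal_zero (σ : Scheduler M) (π : Hist S A) (R : Finset ι) :
    discVal M w T γ σ 0 π R = ∑ i ∈ hits T (Hist.last π) \ R, w i := by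
  simp only [discVal, dreachN, mul_ite, mul_one, mul_zero]
  rw [← Finset.sum_filter]
  congr 1
  ext i; simp [hits, and_comm]

lemma discVal_succ (σ : Scheduler M) (n : ℕ) (π : Hist S A) (R : Finset ι) :
    discVal M w T γ σ (n + 1) π R = ∑ i ∈ hits T (Hist.last π) \ R, w i
      + γ * σ.stepExp π (fun π' => discVal M w T γ σ n π' (R ∪ hits T (Hist.last π))) := by
  rw [discVal, ← Finset.sum_filter_add_sum_filter_not Rᶜ (fun i => Hist.last π ∈ T i)]
  congr 1
  · rw [Finset.sum_congr rfl fun i hi => by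
      rw [dreachN_succ, if_pos (Finset.mem_filter.1 hi).2, mul_one]]
    congr 1
    ext i; simp [hits, and_comm]
  · simp only [discVal]
    rw [Finset.sum_congr rfl fun i hi => by rw [dreachN_succ, if_neg (Finset.mem_filter.1 hi).2],
      σ.stepExp_sum_mul, Finset.mul_sum]
    refine Finset.sum_congr (by ext i; simp [hits, and_comm]) fun i _ => by ring

lemma VisitPolicy.stepExp_toScheduler (p : VisitPolicy M ι) (π : Hist S A) (g : Hist S A → ℝ) :
    (p.toScheduler T).stepExp π g = ∑ s', M.P (Hist.last π) (p.1 (Hist.last π) (visited T π)) s'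
      * g (π.snoc (p.1 (Hist.last π) (visited T π)) s') :=
  Scheduler.stepExp_ofAction _ _ π g

section FixedPoint

variable {x : S → Finset ι → ℝ} (hγ₀ : 0 ≤ γ) (hx : bellman M w T γ x = x)
include hγ₀ hx

lemma abs_discVal_zero_sub_le (σ : Scheduler M) (π : Hist S A) (R : Finset ι) :
    |discVal M w T γ σ 0 π R - x (Hist.last π) R| ≤ γ * dist x 0 := by
  have h : discVal M w T γ σ 0 π R = bellman M w T γ 0 (Hist.last π) R := by
    simp [discVal_zero, bellman, MDP.bestExp_const]
  have := (abs_sub_le_dist_pi₂ _ _ (Hist.last π) R).trans (dist_bellman_le M w T hγ₀ 0 x)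
  rwa [hx, dist_comm, ← h] at this

lemma discVal_le (n : ℕ) (σ : Scheduler M) (π : Hist S A) (R : Finset ι) :
    discVal M w T γ σ n π R ≤ x (Hist.last π) R + γ ^ (n + 1) * dist x 0 := by
  induction n generalizing π R with
  | zero =>
    have := abs_discVal_zero_sub_le M w T hγ₀ hx σ π R
    rw [abs_le] at this
    simp only [zero_add, pow_one]
    linarith
  | succ n ih =>
    set R' := R ∪ hits T (Hist.last π)
    have hstep := σ.stepExp_le_bestExp_add π (x := fun s' => x s' R') fun π' => ih π' R'
    have hxs := congrFun (congrFun hx (Hist.last π)) R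
    rw [bellman] at hxs
    rw [discVal_succ, ← hxs, pow_succ]
    nlinarith [mul_le_mul_of_nonneg_left hstep hγ₀]

lemma le_discVal_toScheduler (p : VisitPolicy M ι)
    (hp : ∀ s R, ∑ s', M.P s (p.1 s R) s' * x s' R = M.bestExp (fun s' => x s' R) s) (n : ℕ)
    (π : Hist S A) (R : Finset ι) (hπ : visited T π = R ∪ hits T (Hist.last π)) :
    x (Hist.last π) R - γ ^ (n + 1) * dist x 0 ≤ discVal M w T γ (p.toScheduler T) n π R := by
  induction n generalizing π R with
  | zero =>
    have := abs_discVal_zero_sub_le M w T hγ₀ hx (p.toScheduler T) π R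
    rw [abs_le] at this
    simp only [zero_add, pow_one]
    linarith
  | succ n ih =>
    set R' := R ∪ hits T (Hist.last π)
    set a := p.1 (Hist.last π) R'
    have hstep : M.bestExp (fun s' => x s' R') (Hist.last π) - γ ^ (n + 1) * dist x 0
        ≤ (p.toScheduler T).stepExp π (fun π' => discVal M w T γ (p.toScheduler T) n π' R') := by
      rw [VisitPolicy.stepExp_toScheduler, hπ, ← hp,
        sub_eq_add_neg, ← MDP.sum_P_mul_add_const (p.2 _ R')]
      refine Finset.sum_le_sum fun s' _ => mul_le_mul_of_nonneg_left ?_ (M.nonneg _ a s')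
      have := ih (π.snoc a s') R' (by rw [visited_snoc, hπ, Hist.last_snoc])
      rw [Hist.last_snoc] at this
      linarith
    have hxs := congrFun (congrFun hx (Hist.last π)) R
    rw [bellman] at hxs
    rw [discVal_succ, ← hxs, pow_succ]
    nlinarith [mul_le_mul_of_nonneg_left hstep hγ₀]

end FixedPoint

lemma tendsto_discVal (hγ₀ : 0 ≤ γ) (hγ₁ : γ ≤ 1) (σ : Scheduler M) (s : S) :
    Tendsto (fun n => discVal M w T γ σ n (s, []) ∅) atTop
      (nhds (∑ i, w i * dPr M γ σ s (T i))) := by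
  simp only [discVal, Finset.compl_empty]
  exact tendsto_finsetSum _ fun i _ => (tendsto_dreachN_dPr σ (T i) s hγ₀ hγ₁).const_mul (w i)

lemma exists_visitPolicy_optimal_discounted (hγ₀ : 0 ≤ γ) (hγ₁ : γ < 1) (s : S) :
    ∃ p : VisitPolicy M ι, ∀ σ : Scheduler M,
      ∑ i, w i * dPr M γ σ s (T i) ≤ ∑ i, w i * dPr M γ (p.toScheduler T) s (T i) := by
  have hc := bellman_contractingWith M w T hγ₀ hγ₁
  set x := ContractingWith.fixedPoint _ hc
  have hx : bellman M w T γ x = x := hc.fixedPoint_isFixedPt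
  obtain ⟨p, hp⟩ : ∃ p : VisitPolicy M ι,
      ∀ s R, ∑ s', M.P s (p.1 s R) s' * x s' R = M.bestExp (fun s' => x s' R) s := by
    choose p hp using fun s R => M.exists_enabled_sum_P_mul_eq_bestExp (fun s' => x s' R) s
    exact ⟨⟨p, fun s R => (hp s R).1⟩, fun s R => (hp s R).2⟩
  refine ⟨p, fun σ => ?_⟩
  have hpow : Tendsto (fun n => γ ^ (n + 1) * dist x 0) atTop (nhds 0) := by
    simpa using ((tendsto_pow_atTop_nhds_zero_of_lt_one hγ₀ hγ₁).comp
      (tendsto_add_atTop_nat 1)).mul_const (dist x 0)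
  have h₁ : ∑ i, w i * dPr M γ σ s (T i) ≤ x s ∅ :=
    le_of_tendsto_of_tendsto' (tendsto_discVal M w T hγ₀ hγ₁.le σ s)
      (by simpa using tendsto_const_nhds.add hpow)
      fun n => discVal_le M w T hγ₀ hx n σ (s, []) ∅
  have h₂ : x s ∅ ≤ ∑ i, w i * dPr M γ (p.toScheduler T) s (T i) :=
    le_of_tendsto_of_tendsto' (by simpa using tendsto_const_nhds.sub hpow)
      (tendsto_discVal M w T hγ₀ hγ₁.le _ s)
      fun n => le_discVal_toScheduler M w T hγ₀ hx p hp n (s, []) ∅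
        (by rw [visited_nil, Hist.last_nil, Finset.empty_union])
  exact h₁.trans h₂

end Bellman

section Optimal

variable {ι : Type*} [Fintype ι] (M) (w : ι → ℝ) (T : ι → Set S) (s : S)

theorem exists_scheduler_maximizing :
    ∃ σ' : Scheduler M, ∀ σ, ∑ i, w i * Pr M σ s (T i) ≤ ∑ i, w i * Pr M σ' s (T i) := by
  set γ : ℕ → ℝ := fun k => 1 - 1 / (k + 1)
  have hγ₀ : ∀ k, 0 ≤ γ k := fun k => sub_nonneg.2 (div_le_one_of_le₀ (by simp) (by positivity))
  have hγ₁ : ∀ k, γ k < 1 := fun k => sub_lt_self 1 Nat.one_div_pos_of_nat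
  have hγ : Tendsto γ atTop (nhds 1) := by
    simpa [γ] using (tendsto_const_nhds (x := (1 : ℝ))).sub tendsto_one_div_add_atTop_nhds_zero_nat
  choose p hp using fun k => exists_visitPolicy_optimal_discounted M w T (hγ₀ k) (hγ₁ k) s
  obtain ⟨p₀, hp₀⟩ := Finite.exists_infinite_fiber p
  obtain ⟨φ, hφ, hφp⟩ := extraction_of_frequently_atTop
    (Nat.frequently_atTop_iff_infinite.2 (Set.infinite_coe_iff.1 hp₀))
  have hlim : ∀ σ, Tendsto (fun j => ∑ i, w i * dPr M (γ (φ j)) σ s (T i)) atTop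
      (nhds (∑ i, w i * Pr M σ s (T i))) := fun σ =>
    tendsto_finsetSum _ fun i _ => (tendsto_dPr_Pr σ (T i) s (fun j => hγ₀ _)
      (fun j => (hγ₁ _).le) (hγ.comp hφ.tendsto_atTop)).const_mul _
  refine ⟨p₀.toScheduler T, fun σ => le_of_tendsto_of_tendsto' (hlim σ) (hlim _) fun j => ?_⟩
  have := hp (φ j) σ
  rwa [show p (φ j) = p₀ from hφp j] at this

theorem exists_scheduler_minimizing :
    ∃ σ' : Scheduler M, ∀ σ, ∑ i, w i * Pr M σ' s (T i) ≤ ∑ i, w i * Pr M σ s (T i) := by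
  obtain ⟨σ', h⟩ := exists_scheduler_maximizing M (-w) T s
  exact ⟨σ', fun σ => by simpa using h σ⟩

end Optimal

section Relational

variable {m n : ℕ} (M) (q : Fin m → ℚ) (s : Fin m → S) (k : Fin m → Fin n) (T : Fin m → Set S)

lemma combVal_eq_sum_ite (σ : Scheduler M) (c : S × Fin n) :
    combVal M q s k T σ c
      = ∑ i, (if (s i, k i) = c then (q i : ℝ) else 0) * Pr M σ c.1 (T i) := by
  simp only [combVal, Finset.sum_filter, ite_mul, zero_mul]

lemma isGreatest_sSup_combVal (c : S × Fin n) :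
    IsGreatest {x | ∃ σ : Scheduler M, x = combVal M q s k T σ c}
      (sSup {x | ∃ σ : Scheduler M, x = combVal M q s k T σ c}) := by
  obtain ⟨σ, hσ⟩ := exists_scheduler_maximizing M _ T c.1
  have h : IsGreatest {x | ∃ σ : Scheduler M, x = combVal M q s k T σ c} (combVal M q s k T σ c) :=
    ⟨⟨σ, rfl⟩, by rintro _ ⟨σ', rfl⟩; simpa only [combVal_eq_sum_ite] using hσ σ'⟩
  rwa [h.csSup_eq]

lemma isLeast_sInf_combVal (c : S × Fin n) :
    IsLeast {x | ∃ σ : Scheduler M, x = combVal M q s k T σ c}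
      (sInf {x | ∃ σ : Scheduler M, x = combVal M q s k T σ c}) := by
  obtain ⟨σ, hσ⟩ := exists_scheduler_minimizing M _ T c.1
  have h : IsLeast {x | ∃ σ : Scheduler M, x = combVal M q s k T σ c} (combVal M q s k T σ c) :=
    ⟨⟨σ, rfl⟩, by rintro _ ⟨σ', rfl⟩; simpa only [combVal_eq_sum_ite] using hσ σ'⟩
  rwa [h.csInf_eq]

lemma combVal_glue (F : S → Scheduler M) (c : S × Fin n) :
    combVal M q s k T (Scheduler.glue F) c = combVal M q s k T (F c.1) c := by
  simp only [combVal, Scheduler.Pr_glue]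

lemma combVal_mix (σ₀ σ₁ : Scheduler M) {a b : ℝ} (ha : 0 ≤ a) (hb : 0 ≤ b) (hab : a + b = 1)
    (c : S × Fin n) :
    combVal M q s k T (Scheduler.mix σ₀ σ₁ a b ha hb) c
      = a * combVal M q s k T σ₀ c + b * combVal M q s k T σ₁ c := by
  simp only [combVal, Scheduler.Pr_mix σ₀ σ₁ ha hb hab, Finset.mul_sum, ← Finset.sum_add_distrib]
  exact Finset.sum_congr rfl fun i _ => by ring

lemma sum_eq_sum_combSet_combVal (σ : Fin n → Scheduler M) :
    ∑ i, (q i : ℝ) * Pr M (σ (k i)) (s i) (T i)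
      = ∑ c ∈ combSet s k, combVal M q s k T (σ c.2) c := by
  rw [combSet, ← Finset.sum_fiberwise_of_maps_to (g := fun i => (s i, k i))
    fun i _ => Finset.mem_image_of_mem _ (Finset.mem_univ i)]
  refine Finset.sum_congr rfl fun c _ => Finset.sum_congr rfl fun i hi => ?_
  rw [← (Finset.mem_filter.1 hi).2]

lemma vMin_le_vMax : vMin M q s k T ≤ vMax M q s k T := by
  refine Finset.sum_le_sum fun c _ => ?_
  obtain ⟨σ, hσ⟩ := (isLeast_sInf_combVal M q s k T c).1
  rw [hσ]
  exact (isGreatest_sSup_combVal M q s k T c).2 ⟨σ, rfl⟩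

lemma achSet_subset_Icc : achSet M q s k T ⊆ Set.Icc (vMin M q s k T) (vMax M q s k T) := by
  rintro _ ⟨σ, rfl⟩
  rw [sum_eq_sum_combSet_combVal]
  exact ⟨Finset.sum_le_sum fun c _ => (isLeast_sInf_combVal M q s k T c).2 ⟨σ c.2, rfl⟩,
    Finset.sum_le_sum fun c _ => (isGreatest_sSup_combVal M q s k T c).2 ⟨σ c.2, rfl⟩⟩

lemma segment_subset_achSet :
    segment ℝ (vMin M q s k T) (vMax M q s k T) ⊆ achSet M q s k T := by
  rintro _ ⟨a, b, ha, hb, hab, rfl⟩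
  choose σmin hσmin using fun c => (isLeast_sInf_combVal M q s k T c).1
  choose σmax hσmax using fun c => (isGreatest_sSup_combVal M q s k T c).1
  obtain ⟨σ, hσ⟩ : ∃ σ : Fin n → Scheduler M, ∀ j,
      σ j = Scheduler.glue fun st => Scheduler.mix (σmin (st, j)) (σmax (st, j)) a b ha hb :=
    ⟨_, fun _ => rfl⟩
  refine ⟨σ, ?_⟩
  rw [sum_eq_sum_combSet_combVal, vMin, vMax, smul_eq_mul, smul_eq_mul, Finset.mul_sum,
    Finset.mul_sum, ← Finset.sum_add_distrib]
  refine Finset.sum_congr rfl fun c _ => ?_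
  rw [hσ, combVal_glue, combVal_mix M q s k T _ _ ha hb hab, hσmin, hσmax]

lemma achSet_eq_Icc : achSet M q s k T = Set.Icc (vMin M q s k T) (vMax M q s k T) :=
  (achSet_subset_Icc M q s k T).antisymm <|
    (segment_eq_Icc (vMin_le_vMax M q s k T)).symm.subset.trans (segment_subset_achSet M q s k T)

end Relational

end

theorem approx_equality_iff_in_interval_general
    {S A : Type*} [Fintype S] [Fintype A]
    (M : MDP S A) {m n : ℕ}
    (q : Fin m → ℚ) (s : Fin m → S) (k : Fin m → Fin n)
    (T : Fin m → Set S)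
    (q₀ : ℚ) (ε : ℝ) (hε : 0 ≤ ε) :
    (∃ σ : Fin n → Scheduler M,
        |(∑ i, (q i : ℝ) * Pr M (σ (k i)) (s i) (T i)) - (q₀ : ℝ)| ≤ ε) ↔
      (q₀ : ℝ) ∈ Set.Icc (vMin M q s k T - ε) (vMax M q s k T + ε) := by
  rw [← exists_mem_Icc_abs_sub_le_iff (vMin_le_vMax M q s k T) hε, ← achSet_eq_Icc]
  constructor
  · rintro ⟨σ, h⟩
    exact ⟨_, ⟨σ, rfl⟩, h⟩
  · rintro ⟨_, ⟨σ, rfl⟩, h⟩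
    exact ⟨σ, h⟩

/-- For every rational `q₀` and every `ε ≥ 0`, there are schedulers
`σ₁,…,σₙ` with `|Σᵢ qᵢ · Pr^{σ_{k(i)}}_{sᵢ}(◇Tᵢ) − q₀| ≤ ε` if and only if
`q₀ ∈ [v^min − ε, v^max + ε]`. -/
theorem approx_equality_iff_in_interval
    {S A : Type*} [Fintype S] [Fintype A] [Nonempty S] [Nonempty A]
    (M : MDP S A) {m n : ℕ} (hn : 1 ≤ n) (hmn : n ≤ m)
    (q : Fin m → ℚ) (s : Fin m → S) (k : Fin m → Fin n)
    (hk : Function.Surjective k) (T : Fin m → Set S)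
    (q₀ : ℚ) (ε : ℝ) (hε : 0 ≤ ε) :
    (∃ σ : Fin n → Scheduler M,
        |(∑ i, (q i : ℝ) * Pr M (σ (k i)) (s i) (T i)) - (q₀ : ℝ)| ≤ ε) ↔
      (q₀ : ℝ) ∈ Set.Icc (vMin M q s k T - ε) (vMax M q s k T + ε) :=
  approx_equality_iff_in_interval_general M q s k T q₀ ε hε
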